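/- arXiv:1902.01002 — 3 statements merged into one kernel-verified Lean document; each statement's English description precedes it below -/
import Mathlib

section
/- Let G be a strict episode and let H be a state (prefix subgraph) of the machine M(G). Then any two distinct outgoing edges of H in M(G) have distinct labels; that is, if (H, F₁) and (H, F₂) are edges of M(G) with the same label, then F₁ = F₂. -/
open scoped Classical

/-- An episode: a finite DAG with labelled vertices. -/
structure Episode (V A : Type*) where
  verts : Finset V
  edges : Finset (V × V)
  lab : V → A
  edges_sub : ∀ e ∈ edges, e.1 ∈ verts ∧ e.2 ∈ verts
  acyclic : ∀ v, ¬ Relation.TransGen (fun a b => (a, b) ∈ edges) v v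

namespace Episode

variable {V A : Type*} [DecidableEq V]

/-- A strict episode: any two distinct vertices sharing a label are connected. -/
def Strict (G : Episode V A) : Prop :=
  ∀ v ∈ G.verts, ∀ w ∈ G.verts, v ≠ w → G.lab v = G.lab w →
    (v, w) ∈ G.edges ∨ (w, v) ∈ G.edges

/-- `W` induces a prefix subgraph of `G`: it is closed under taking ancestors. -/
def IsPrefix (G : Episode V A) (W : Finset V) : Prop :=
  W ⊆ G.verts ∧ ∀ v ∈ W, ∀ w, (w, v) ∈ G.edges → w ∈ W

/-- Labelled edge of the machine `M(G)`: `(H, F)` is an edge with label `l` when `H` is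
obtained from `F` by deleting a single sink vertex of `F` labelled `l`
(states are identified with their vertex sets, as prefix subgraphs are induced). -/
def MachEdge (G : Episode V A) (H F : Finset V) (l : A) : Prop :=
  G.IsPrefix H ∧ G.IsPrefix F ∧
    ∃ x, x ∉ H ∧ F = insert x H ∧ G.lab x = l ∧ ∀ w ∈ F, (x, w) ∉ G.edges

/-- The set of (unlabelled) edges of the machine `M(G)`. -/
def MachineEdges (G : Episode V A) : Set (Finset V × Finset V) :=
  {e | ∃ l, G.MachEdge e.1 e.2 l}

/-- A sequence `S` covers an episode `G`. -/
def Covers (G : Episode V A) (S : List A) : Prop :=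
  ∃ m : V → ℕ, Set.InjOn m ↑G.verts ∧
    (∀ v ∈ G.verts, S[m v]? = some (G.lab v)) ∧
    ∀ e ∈ G.edges, m e.1 < m e.2

/-- The induced episode `G(W)`. -/
def induce (G : Episode V A) (W : Finset V) : Episode V A where
  verts := G.verts ∩ W
  edges := G.edges.filter fun e => e.1 ∈ W ∧ e.2 ∈ W
  lab := G.lab
  edges_sub := by
    intro e he
    rw [Finset.mem_filter] at he
    have h1 := G.edges_sub e he.1
    exact ⟨Finset.mem_inter.mpr ⟨h1.1, he.2.1⟩, Finset.mem_inter.mpr ⟨h1.2, he.2.2⟩⟩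
  acyclic := by
    intro v hv
    exact G.acyclic v
      (Relation.TransGen.mono (fun a b hab => (Finset.mem_filter.mp hab).1) v v hv)

/-- One greedy step of the machine `M(G)` from state `H` reading the symbol `s`:
follow the outgoing edge labelled `s` if there is one, otherwise stay. -/
noncomputable def greedyStep (G : Episode V A) (H : Finset V) (s : A) : Finset V :=
  if h : ∃ F, G.MachEdge H F s then h.choose else H

/-- The greedy state `g(M(G), S, H)`. -/
noncomputable def greedy (G : Episode V A) : Finset V → List A → Finset V
  | H, [] => H
  | H, s :: S => greedy G (G.greedyStep H s) S

/-- The edge set `block(W | G)` of the machine `M(G)`. -/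
def Block (G : Episode V A) (W : Finset V) : Set (Finset V × Finset V) :=
  {e | (∃ l, G.MachEdge e.1 e.2 l) ∧ (e.1 ∩ W).Nonempty ∧ e.2 \ e.1 ⊆ W}

/-- The states of the machine `M(G)`: all prefix subgraphs of `G`. -/
noncomputable def states (G : Episode V A) : Finset (Finset V) :=
  G.verts.powerset.filter fun X => G.IsPrefix X

/-- The number of positions `i` of `S` at which the machine is (greedily) in state `H`
and the symbol read is `l`. -/
noncomputable def countHL (G : Episode V A) (S : List A) (H : Finset V) (l : A) : ℕ :=
  ((Finset.range S.length).filter fun i => G.greedy ∅ (S.take i) = H ∧ S[i]? = some l).card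

section Prob

variable [Fintype A]

/-- `pInd G p H n`: probability that `n` i.i.d. symbols with distribution `p`
lead the machine greedily from the source state to `H`. -/
noncomputable def pInd (G : Episode V A) (p : A → ℝ) (H : Finset V) (n : ℕ) : ℝ :=
  ∑ f : Fin n → A, if G.greedy ∅ (List.ofFn f) = H then ∏ i, p (f i) else 0

/-- Unnormalized weight of label `l` at state `H` in the partition model. -/
noncomputable def pweight (G : Episode V A) (C₁ C₂ : Set (Finset V × Finset V))
    (u : A → ℝ) (t₁ t₂ : ℝ) (H : Finset V) (l : A) : ℝ :=
  if ∃ F, (H, F) ∈ C₁ ∧ G.MachEdge H F l then Real.exp (u l + t₁)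
  else if ∃ F, (H, F) ∈ C₂ ∧ G.MachEdge H F l then Real.exp (u l + t₂)
  else Real.exp (u l)

/-- Conditional probability `p(l | H)` of the partition model. -/
noncomputable def condP (G : Episode V A) (C₁ C₂ : Set (Finset V × Finset V))
    (u : A → ℝ) (t₁ t₂ : ℝ) (H : Finset V) (l : A) : ℝ :=
  G.pweight C₁ C₂ u t₁ t₂ H l / ∑ l' : A, G.pweight C₁ C₂ u t₁ t₂ H l'

/-- Probability of a sequence under the partition model, started from state `H`. -/
noncomputable def seqP (G : Episode V A) (C₁ C₂ : Set (Finset V × Finset V))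
    (u : A → ℝ) (t₁ t₂ : ℝ) : Finset V → List A → ℝ
  | _, [] => 1
  | H, s :: S => G.condP C₁ C₂ u t₁ t₂ H s * seqP G C₁ C₂ u t₁ t₂ (G.greedyStep H s) S

/-- `pPart G C₁ C₂ u t₁ t₂ H n`: probability under the partition model that a random
sequence of length `n` leads the machine greedily from the source state to `H`. -/
noncomputable def pPart (G : Episode V A) (C₁ C₂ : Set (Finset V × Finset V))
    (u : A → ℝ) (t₁ t₂ : ℝ) (H : Finset V) (n : ℕ) : ℝ :=
  ∑ f : Fin n → A,
    if G.greedy ∅ (List.ofFn f) = H then G.seqP C₁ C₂ u t₁ t₂ ∅ (List.ofFn f) else 0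

end Prob

/-- The transitive closure of an episode. -/
noncomputable def closure (G : Episode V A) : Episode V A where
  verts := G.verts
  edges := (G.verts ×ˢ G.verts).filter fun e =>
    Relation.TransGen (fun a b => (a, b) ∈ G.edges) e.1 e.2
  lab := G.lab
  edges_sub := by
    intro e he
    rw [Finset.mem_filter] at he
    exact Finset.mem_product.mp he.1
  acyclic := by
    intro v hv
    apply G.acyclic v
    rw [← Relation.transGen_idem (r := fun a b => (a, b) ∈ G.edges)]
    refine Relation.TransGen.mono ?_ v v hv
    intro a b hab
    exact (Finset.mem_filter.mp hab).2

end Episode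

namespace Episode

variable {V A : Type*} [DecidableEq V] {G : Episode V A} {H : Finset V} {x y : V}

theorem IsPrefix.eq_of_mem_edges_insert (hy : G.IsPrefix (insert y H)) (hx : x ∉ H)
    (hxy : (x, y) ∈ G.edges) : x = y :=
  (Finset.mem_insert.mp (hy.2 y (Finset.mem_insert_self y H) x hxy)).resolve_right hx

theorem Strict.eq_of_isPrefix_insert (hG : G.Strict) (hx : G.IsPrefix (insert x H))
    (hy : G.IsPrefix (insert y H)) (hxH : x ∉ H) (hyH : y ∉ H) (hlab : G.lab x = G.lab y) :
    x = y := by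
  by_contra hne
  rcases hG x (hx.1 (Finset.mem_insert_self x H)) y (hy.1 (Finset.mem_insert_self y H))
    hne hlab with hxy | hyx
  · exact hne (hy.eq_of_mem_edges_insert hxH hxy)
  · exact hne (hx.eq_of_mem_edges_insert hyH hyx).symm

end Episode

/-- In the machine of a strict episode, any two distinct outgoing edges of a
state have distinct labels: two outgoing edges with the same label have the same target. -/
theorem Episode.machEdge_out_label_unique {V A : Type*} [DecidableEq V]
    (G : Episode V A) (hG : G.Strict) (H F₁ F₂ : Finset V) (l : A)
    (h₁ : G.MachEdge H F₁ l) (h₂ : G.MachEdge H F₂ l) : F₁ = F₂ := by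
  obtain ⟨-, hF₁, x₁, hx₁, rfl, rfl, -⟩ := h₁
  obtain ⟨-, hF₂, x₂, hx₂, rfl, hlab, -⟩ := h₂
  rw [hG.eq_of_isPrefix_insert hF₁ hF₂ hx₁ hx₂ hlab.symm]
end

section
/- Let G be a strict episode and let H be a state (prefix subgraph) of the machine M(G). Then any two distinct incoming edges of H in M(G) have distinct labels; that is, if (F₁, H) and (F₂, H) are edges of M(G) with the same label, then F₁ = F₂. -/
open scoped Classical

namespace Episode

variable {V A : Type*}

theorem Strict.eq_of_isSink_of_lab_eq {G : Episode V A} (hG : G.Strict) {W : Finset V}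
    (hW : W ⊆ G.verts) {x y : V} (hx : x ∈ W) (hy : y ∈ W)
    (hx_sink : ∀ w ∈ W, (x, w) ∉ G.edges) (hy_sink : ∀ w ∈ W, (y, w) ∉ G.edges)
    (hl : G.lab x = G.lab y) : x = y := by
  by_contra hne
  rcases hG x (hW hx) y (hW hy) hne hl with hxy | hyx
  · exact hx_sink y hy hxy
  · exact hy_sink x hx hyx

theorem MachEdge.exists_sink_eq_erase [DecidableEq V] {G : Episode V A} {F H : Finset V}
    {l : A} (h : G.MachEdge F H l) :
    ∃ x ∈ H, G.lab x = l ∧ (∀ w ∈ H, (x, w) ∉ G.edges) ∧ F = H.erase x := by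
  obtain ⟨-, -, x, hxF, rfl, hl, hsink⟩ := h
  exact ⟨x, F.mem_insert_self x, hl, hsink, (F.erase_insert hxF).symm⟩

end Episode

/-- In the machine of a strict episode, any two distinct incoming edges of a
state have distinct labels: two incoming edges with the same label have the same source. -/
theorem Episode.machEdge_in_label_unique {V A : Type*} [DecidableEq V]
    (G : Episode V A) (hG : G.Strict) (H F₁ F₂ : Finset V) (l : A)
    (h₁ : G.MachEdge F₁ H l) (h₂ : G.MachEdge F₂ H l) : F₁ = F₂ := by
  have hH : H ⊆ G.verts := h₁.2.1.1
  obtain ⟨x₁, hx₁, hl₁, hsink₁, rfl⟩ := h₁.exists_sink_eq_erase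
  obtain ⟨x₂, hx₂, hl₂, hsink₂, rfl⟩ := h₂.exists_sink_eq_erase
  rw [hG.eq_of_isSink_of_lab_eq hH hx₁ hx₂ hsink₁ hsink₂ (hl₁.trans hl₂.symm)]
end

section
/- Let G be a strict episode with machine M = M(G). A sequence S over Σ covers the episode G if and only if S covers the sink state of M(G), i.e., if and only if there exists a subsequence T of S such that the greedy state g(M, T) (started from the source state G(∅)) equals G. -/
open scoped Classical

/-!
A cover `m` of `G` by `S` orders the vertices by position. Reading, in that order, only the
symbols of `S` at positions in the image of `m`, the greedy machine walks through the prefix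
subgraphs `{v | m v < n}`: strictness makes the outgoing edge labelled `ℓ(v)` unique, so the
greedy run cannot deviate. Conversely, along any greedy run, stamping each vertex with the
position at which it was added is a cover of the state reached, since an added vertex is a sink
of the new state and its predecessors are already present.
-/

namespace Episode

variable {V A : Type*} {G : Episode V A}

theorem Covers.mono {T S : List A} (hTS : T.Sublist S) (hT : G.Covers T) : G.Covers S := by
  obtain ⟨f, hf⟩ := List.sublist_iff_exists_orderEmbedding_getElem?_eq.mp hTS
  obtain ⟨m, hinj, hlab, hm⟩ := hT
  exact ⟨f ∘ m, f.injective.comp_injOn hinj, fun v hv => (hf (m v)).symm.trans (hlab v hv),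
    fun e he => f.strictMono (hm e he)⟩

def vertsBelow (G : Episode V A) (m : V → ℕ) (n : ℕ) : Finset V :=
  G.verts.filter (m · < n)

section Below

variable {m : V → ℕ}

theorem mem_vertsBelow {n : ℕ} {v : V} : v ∈ G.vertsBelow m n ↔ v ∈ G.verts ∧ m v < n :=
  Finset.mem_filter

theorem isPrefix_vertsBelow (hm : ∀ e ∈ G.edges, m e.1 < m e.2) (n : ℕ) :
    G.IsPrefix (G.vertsBelow m n) := by
  refine ⟨Finset.filter_subset _ _, fun v hv w hwv => ?_⟩
  rw [mem_vertsBelow] at hv ⊢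
  exact ⟨(G.edges_sub _ hwv).1, (hm _ hwv).trans hv.2⟩

theorem vertsBelow_succ_of_forall_ne {n : ℕ} (hn : ∀ v ∈ G.verts, m v ≠ n) :
    G.vertsBelow m (n + 1) = G.vertsBelow m n := by
  ext v
  simp only [mem_vertsBelow]
  exact and_congr_right fun hv => by have := hn v hv; omega

end Below

variable [DecidableEq V]

section Induce

variable (G) (W : Finset V)

@[simp] theorem induce_verts : (G.induce W).verts = G.verts ∩ W := rfl

@[simp] theorem induce_edges :
    (G.induce W).edges = G.edges.filter fun e => e.1 ∈ W ∧ e.2 ∈ W := rfl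

@[simp] theorem induce_lab : (G.induce W).lab = G.lab := rfl

theorem induce_self_verts : G.induce G.verts = G := by
  obtain ⟨verts, edges, lab, edges_sub, acyclic⟩ := G
  simp only [induce, Finset.inter_self, mk.injEq, true_and, and_true]
  exact Finset.filter_true_of_mem edges_sub

end Induce

theorem machEdge_unique (hG : G.Strict) {H F₁ F₂ : Finset V} {l : A}
    (h₁ : G.MachEdge H F₁ l) (h₂ : G.MachEdge H F₂ l) : F₁ = F₂ := by
  obtain ⟨-, hF₁, x₁, hx₁H, rfl, rfl, -⟩ := h₁
  obtain ⟨-, hF₂, x₂, hx₂H, rfl, hl, -⟩ := h₂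
  obtain rfl | hne := eq_or_ne x₁ x₂
  · rfl
  have hx₁ := hF₁.1 (Finset.mem_insert_self _ _)
  have hx₂ := hF₂.1 (Finset.mem_insert_self _ _)
  obtain he | he := hG x₁ hx₁ x₂ hx₂ hne hl.symm
  · have := hF₂.2 x₂ (Finset.mem_insert_self _ _) x₁ he
    simp_all
  · have := hF₁.2 x₁ (Finset.mem_insert_self _ _) x₂ he
    simp_all [eq_comm]

theorem greedyStep_eq_or_machEdge (G : Episode V A) (H : Finset V) (s : A) :
    G.greedyStep H s = H ∨ G.MachEdge H (G.greedyStep H s) s := by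
  unfold greedyStep
  split_ifs with h
  · exact Or.inr h.choose_spec
  · exact Or.inl rfl

theorem greedyStep_eq_of_machEdge (hG : G.Strict) {H F : Finset V} {s : A}
    (h : G.MachEdge H F s) : G.greedyStep H s = F := by
  have hex : ∃ F, G.MachEdge H F s := ⟨F, h⟩
  rw [greedyStep, dif_pos hex]
  exact machEdge_unique hG hex.choose_spec h

@[simp] theorem greedy_nil (G : Episode V A) (H : Finset V) : G.greedy H [] = H := rfl

theorem greedy_append_singleton (G : Episode V A) (H : Finset V) (T : List A) (s : A) :
    G.greedy H (T ++ [s]) = G.greedyStep (G.greedy H T) s := by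
  induction T generalizing H with
  | nil => rfl
  | cons t T ih => exact ih _

theorem vertsBelow_succ_self {m : V → ℕ} (hinj : Set.InjOn m G.verts) {v : V}
    (hv : v ∈ G.verts) :
    G.vertsBelow m (m v + 1) = insert v (G.vertsBelow m (m v)) := by
  ext w
  simp only [Finset.mem_insert, mem_vertsBelow]
  constructor
  · rintro ⟨hw, hlt⟩
    obtain hlt | heq := Nat.lt_succ_iff_lt_or_eq.mp hlt
    · exact Or.inr ⟨hw, hlt⟩
    · exact Or.inl (hinj hw hv heq)
  · rintro (rfl | ⟨hw, hlt⟩)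
    · exact ⟨hv, Nat.lt_succ_self _⟩
    · exact ⟨hw, hlt.trans (Nat.lt_succ_self _)⟩

theorem machEdge_vertsBelow {m : V → ℕ} (hm : ∀ e ∈ G.edges, m e.1 < m e.2)
    (hinj : Set.InjOn m G.verts) {v : V} (hv : v ∈ G.verts) :
    G.MachEdge (G.vertsBelow m (m v)) (G.vertsBelow m (m v + 1)) (G.lab v) := by
  refine ⟨isPrefix_vertsBelow hm _, isPrefix_vertsBelow hm _, v, ?_,
    vertsBelow_succ_self hinj hv, rfl, fun w hw hvw => ?_⟩
  · simp [mem_vertsBelow]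
  · have hwv := (mem_vertsBelow.mp hw).2
    have hvw := hm _ hvw
    dsimp only at hvw
    omega

theorem exists_sublist_take_greedy_eq_vertsBelow (hG : G.Strict) {S : List A} {m : V → ℕ}
    (hinj : Set.InjOn m G.verts) (hlab : ∀ v ∈ G.verts, S[m v]? = some (G.lab v))
    (hm : ∀ e ∈ G.edges, m e.1 < m e.2) :
    ∀ n, ∃ T : List A, T.Sublist (S.take n) ∧ G.greedy ∅ T = G.vertsBelow m n
  | 0 => ⟨[], List.nil_sublist _, by simp [vertsBelow]⟩
  | n + 1 => by
    obtain ⟨T, hTS, hT⟩ := exists_sublist_take_greedy_eq_vertsBelow hG hinj hlab hm n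
    by_cases hn : ∃ v ∈ G.verts, m v = n
    · obtain ⟨v, hv, rfl⟩ := hn
      refine ⟨T ++ [G.lab v], ?_, ?_⟩
      · rw [List.take_add_one, hlab v hv]
        exact hTS.append (List.Sublist.refl _)
      · rw [greedy_append_singleton, hT,
          greedyStep_eq_of_machEdge hG (machEdge_vertsBelow hm hinj hv)]
    · push Not at hn
      exact ⟨T, hTS.trans (List.take_sublist_take_left n.le_succ),
        by rw [hT, vertsBelow_succ_of_forall_ne hn]⟩

theorem covers_induce_of_machEdge {K F : Finset V} {T : List A} {s : A}
    (hT : (G.induce K).Covers T) (hE : G.MachEdge K F s) :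
    (G.induce F).Covers (T ++ [s]) := by
  obtain ⟨m, hinj, hlab, hm⟩ := hT
  obtain ⟨-, -, x, hxK, rfl, rfl, hsink⟩ := hE
  simp only [induce_verts, induce_lab, Finset.mem_inter] at hlab
  have hlt : ∀ v ∈ G.verts, v ∈ K → m v < T.length := fun v hv hvK =>
    (List.getElem?_eq_some_iff.mp (hlab v ⟨hv, hvK⟩)).1
  have hne : ∀ v ∈ K, v ≠ x := by rintro v hv rfl; exact hxK hv
  refine ⟨Function.update m x T.length, ?_, ?_, ?_⟩
  · intro a ha b hb hab
    simp only [induce_verts, Finset.coe_inter, Set.mem_inter_iff, Finset.mem_coe,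
      Finset.mem_insert] at ha hb
    obtain ⟨ha, rfl | haK⟩ := ha <;> obtain ⟨hb, rfl | hbK⟩ := hb
    · rfl
    · rw [Function.update_self, Function.update_of_ne (hne b hbK)] at hab
      exact absurd hab.symm (hlt b hb hbK).ne
    · rw [Function.update_of_ne (hne a haK), Function.update_self] at hab
      exact absurd hab (hlt a ha haK).ne
    · rw [Function.update_of_ne (hne a haK), Function.update_of_ne (hne b hbK)] at hab
      exact hinj (Finset.mem_inter.mpr ⟨ha, haK⟩) (Finset.mem_inter.mpr ⟨hb, hbK⟩) hab
  · intro v hv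
    simp only [induce_verts, Finset.mem_inter, Finset.mem_insert] at hv
    obtain ⟨hv, rfl | hvK⟩ := hv
    · simp
    · rw [Function.update_of_ne (hne v hvK), List.getElem?_append_left (hlt v hv hvK)]
      exact hlab v ⟨hv, hvK⟩
  · rintro ⟨a, b⟩ he
    simp only [induce_edges, Finset.mem_filter, Finset.mem_insert] at he
    obtain ⟨he, ha, hb⟩ := he
    have haK : a ∈ K := ha.resolve_left fun hax =>
      hsink b (Finset.mem_insert.mpr hb) (hax ▸ he)
    rw [Function.update_of_ne (hne a haK)]
    obtain rfl | hbK := hb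
    · rw [Function.update_self]
      exact hlt a (G.edges_sub _ he).1 haK
    · rw [Function.update_of_ne (hne b hbK)]
      exact hm (a, b) (by simp [he, haK, hbK])

theorem covers_induce_greedy (G : Episode V A) (T : List A) :
    (G.induce (G.greedy ∅ T)).Covers T := by
  induction T using List.reverseRecOn with
  | nil => exact ⟨fun _ => 0, by simp, by simp, by simp⟩
  | append_singleton T s ih =>
    rw [greedy_append_singleton]
    obtain hstay | hE := G.greedyStep_eq_or_machEdge (G.greedy ∅ T) s
    · rw [hstay]
      exact ih.mono (List.sublist_append_left _ _)
    · exact covers_induce_of_machEdge ih hE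

end Episode

/-- A sequence covers a strict episode `G` iff it covers the sink state of the
machine `M(G)`, i.e. iff some subsequence leads greedily from the source state to `G`. -/
theorem Episode.covers_iff_covers_sink {V A : Type*} [DecidableEq V]
    (G : Episode V A) (hG : G.Strict) (S : List A) :
    G.Covers S ↔ ∃ T : List A, T.Sublist S ∧ G.greedy ∅ T = G.verts := by
  constructor
  · rintro ⟨m, hinj, hlab, hm⟩
    obtain ⟨T, hTS, hT⟩ :=
      exists_sublist_take_greedy_eq_vertsBelow hG hinj hlab hm S.length
    have hbelow : G.vertsBelow m S.length = G.verts :=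
      Finset.filter_true_of_mem fun v hv => (List.getElem?_eq_some_iff.mp (hlab v hv)).1
    rw [List.take_length] at hTS
    exact ⟨T, hTS, hT.trans hbelow⟩
  · rintro ⟨T, hTS, hT⟩
    have hcov := G.covers_induce_greedy T
    rw [hT, induce_self_verts] at hcov
    exact hcov.mono hTS
end
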